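/- Let A be a real n×n Hurwitz matrix and Q a real n×n matrix. If X and Y are real n×n matrices satisfying Aᵀ X + X A + Q = 0 and Aᵀ Y + Y A + Q = 0, then X = Y; consequently the Lyapunov equation Aᵀ X + X A + Q = 0 has the unique solution X = ∫_0^∞ exp(Aᵀ t) Q exp(A t) dt. -/

import Mathlib

/-!
If `Aᵀ X + X A + Q = 0`, then `t ↦ exp (t Aᵀ) X exp (t A)` has derivative
`-exp (t Aᵀ) Q exp (t A)`. When both exponentials decay exponentially, integrating over
`[0, ∞)` gives `X = ∫₀^∞ exp (t Aᵀ) Q exp (t A) dt` for every solution `X`, so the solution is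
unique. The decay comes from Gelfand's formula: every eigenvalue of `exp A` is `exp λ` for an
eigenvalue `λ` of `A`, so the spectral radius of `exp A` is below some `exp (-ε) < 1`; hence
`‖exp A ^ k‖ ≤ C exp (-ε k)`, and `exp (t A)` is controlled between integer times by compactness.
-/

open MeasureTheory NormedSpace Set Matrix

/-- A real square matrix is Hurwitz if every eigenvalue of `A`
(viewed as a complex matrix) has negative real part. -/
def IsHurwitz {n : ℕ} (A : Matrix (Fin n) (Fin n) ℝ) : Prop :=
  ∀ μ ∈ spectrum ℂ (A.map Complex.ofReal), μ.re < 0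

open Filter Topology

def DecaysExponentially {E : Type*} [NormedAddCommGroup E] (f : ℝ → E) : Prop :=
  ∃ C ε : ℝ, 0 < ε ∧ ∀ t, 0 ≤ t → ‖f t‖ ≤ C * Real.exp (-(ε * t))

namespace DecaysExponentially

section NormedAddCommGroup

variable {E : Type*} [NormedAddCommGroup E] {f : ℝ → E}

theorem tendsto_zero (hf : DecaysExponentially f) : Tendsto f atTop (𝓝 0) := by
  obtain ⟨C, ε, hε, hfC⟩ := hf
  have hexp : Tendsto (fun t => C * Real.exp (-(ε * t))) atTop (𝓝 0) := by
    simpa using (Real.tendsto_exp_neg_atTop_nhds_zero.comp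
      (tendsto_id.const_mul_atTop hε)).const_mul C
  refine squeeze_zero_norm' ?_ hexp
  filter_upwards [eventually_ge_atTop 0] with t ht using hfC t ht

theorem integrableOn_Ici [NormedSpace ℝ E] (hf : DecaysExponentially f) (hcont : Continuous f) :
    IntegrableOn f (Ici 0) := by
  obtain ⟨C, ε, hε, hfC⟩ := hf
  have hexp : IntegrableOn (fun t => Real.exp (-(ε * t))) (Ici 0) := by
    rw [integrableOn_Ici_iff_integrableOn_Ioi]
    simpa [neg_mul] using exp_neg_integrableOn_Ioi 0 hε
  refine (hexp.const_mul C).mono' hcont.aestronglyMeasurable.restrict ?_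
  exact (ae_restrict_iff' measurableSet_Ici).mpr (Eventually.of_forall hfC)

end NormedAddCommGroup

section NormedRing

variable {𝔸 : Type*} [NormedRing 𝔸] {f g : ℝ → 𝔸}

theorem mul (hf : DecaysExponentially f) (hg : DecaysExponentially g) :
    DecaysExponentially fun t => f t * g t := by
  obtain ⟨C, ε, hε, hfC⟩ := hf
  obtain ⟨D, δ, hδ, hgD⟩ := hg
  refine ⟨C * D, ε + δ, by positivity, fun t ht => ?_⟩
  have hC : 0 ≤ C :=
    nonneg_of_mul_nonneg_left ((norm_nonneg _).trans (hfC 0 le_rfl)) (Real.exp_pos _)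
  calc ‖f t * g t‖ ≤ ‖f t‖ * ‖g t‖ := norm_mul_le _ _
    _ ≤ C * Real.exp (-(ε * t)) * (D * Real.exp (-(δ * t))) :=
      mul_le_mul (hfC t ht) (hgD t ht) (norm_nonneg _) (by positivity)
    _ = C * D * Real.exp (-((ε + δ) * t)) := by
      rw [add_mul, neg_add, Real.exp_add]; ring

theorem mul_const (hf : DecaysExponentially f) (x : 𝔸) :
    DecaysExponentially fun t => f t * x := by
  obtain ⟨C, ε, hε, hfC⟩ := hf
  refine ⟨C * ‖x‖, ε, hε, fun t ht => ?_⟩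
  calc ‖f t * x‖ ≤ ‖f t‖ * ‖x‖ := norm_mul_le _ _
    _ ≤ C * Real.exp (-(ε * t)) * ‖x‖ := by gcongr; exact hfC t ht
    _ = C * ‖x‖ * Real.exp (-(ε * t)) := by ring

end NormedRing

end DecaysExponentially

theorem spectrum.exists_norm_pow_le_of_spectralRadius_lt {A : Type*} [NormedRing A]
    [NormedAlgebra ℂ A] [CompleteSpace A] {a : A} {r : ℝ} (hr : 0 < r)
    (h : spectralRadius ℂ a < ENNReal.ofReal r) :
    ∃ C, ∀ k : ℕ, ‖a ^ k‖ ≤ C * r ^ k := by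
  have hroot : ∀ᶠ k : ℕ in atTop, ‖a ^ k‖ ^ (1 / k : ℝ) < r := by
    filter_upwards
      [(pow_norm_pow_one_div_tendsto_nhds_spectralRadius a).eventually_lt_const h]
      with k hk using (ENNReal.ofReal_lt_ofReal_iff hr).mp hk
  have hbdd : ∀ᶠ k : ℕ in atTop, ‖a ^ k‖ / r ^ k ≤ 1 := by
    filter_upwards [hroot, eventually_ne_atTop 0] with k hk hk0
    rw [div_le_one (by positivity), ← Real.rpow_inv_natCast_pow (norm_nonneg (a ^ k)) hk0,
      ← one_div]
    exact pow_le_pow_left₀ (by positivity) hk.le k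
  obtain ⟨C, hC⟩ := (isBoundedUnder_of_eventually_le hbdd).bddAbove_range
  exact ⟨C, fun k => (div_le_iff₀ (by positivity)).mp (hC (mem_range_self k))⟩

section BanachAlgebra

variable {𝔸 : Type*} [NormedRing 𝔸] [NormedAlgebra ℝ 𝔸] [CompleteSpace 𝔸]

theorem continuous_exp_smul (a : 𝔸) : Continuous fun t : ℝ => exp (t • a) :=
  continuous_iff_continuousAt.2 fun t => (hasDerivAt_exp_smul_const a t).continuousAt

theorem decaysExponentially_exp_smul_of_norm_pow_le {a : 𝔸} {C ε : ℝ} (hε : 0 < ε)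
    (h : ∀ k : ℕ, ‖exp a ^ k‖ ≤ C * Real.exp (-ε) ^ k) :
    DecaysExponentially fun t : ℝ => exp (t • a) := by
  obtain ⟨M, hM⟩ := (isCompact_Icc (a := (0 : ℝ)) (b := 1)).exists_bound_of_continuousOn
    (continuous_exp_smul a).continuousOn
  have hM0 : 0 ≤ M := (norm_nonneg _).trans (hM 0 ⟨le_rfl, zero_le_one⟩)
  -- the exponential laws in Mathlib are stated for Banach `ℚ`-algebras
  let +nondep : NormedAlgebra ℚ 𝔸 := .restrictScalars ℚ ℝ 𝔸
  refine ⟨M * C * Real.exp ε, ε, hε, fun t ht => ?_⟩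
  set k := ⌊t⌋₊
  have hk : (k : ℝ) ≤ t := Nat.floor_le ht
  have hk' : t < k + 1 := Nat.lt_floor_add_one t
  have hsplit : exp (t • a) = exp ((t - k) • a) * exp a ^ k := by
    rw [← NormedSpace.exp_nsmul, ← Nat.cast_smul_eq_nsmul ℝ,
      ← NormedSpace.exp_add_of_commute (((Commute.refl a).smul_left _).smul_right _),
      ← add_smul, sub_add_cancel]
  calc ‖exp (t • a)‖ ≤ ‖exp ((t - k) • a)‖ * ‖exp a ^ k‖ := hsplit ▸ norm_mul_le _ _
    _ ≤ M * (C * Real.exp (-ε) ^ k) :=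
      mul_le_mul (hM _ ⟨by linarith, by linarith⟩) (h k) (norm_nonneg _) hM0
    _ ≤ M * (C * (Real.exp ε * Real.exp (-(ε * t)))) := by
      have hC : 0 ≤ C := by simpa using (norm_nonneg _).trans (h 0)
      rw [← Real.exp_nat_mul, ← Real.exp_add]
      gcongr
      nlinarith
    _ = M * C * Real.exp ε * Real.exp (-(ε * t)) := by ring

theorem hasDerivAt_exp_smul_mul_mul_exp_smul (a b x : 𝔸) (t : ℝ) :
    HasDerivAt (fun t : ℝ => exp (t • a) * x * exp (t • b))
      (exp (t • a) * (a * x + x * b) * exp (t • b)) t :=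
  (((hasDerivAt_exp_smul_const a t).mul_const x).mul
    (hasDerivAt_exp_smul_const' b t)).congr_deriv (by noncomm_ring)

variable {a b : 𝔸}

theorem integrableOn_exp_smul_mul_mul_exp_smul
    (ha : DecaysExponentially fun t : ℝ => exp (t • a))
    (hb : DecaysExponentially fun t : ℝ => exp (t • b)) (q : 𝔸) :
    IntegrableOn (fun t : ℝ => exp (t • a) * q * exp (t • b)) (Ici 0) :=
  ((ha.mul_const q).mul hb).integrableOn_Ici
    (((continuous_exp_smul a).mul continuous_const).mul (continuous_exp_smul b))

theorem eq_integral_of_mul_add_mul_add_eq_zero {q x : 𝔸}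
    (ha : DecaysExponentially fun t : ℝ => exp (t • a))
    (hb : DecaysExponentially fun t : ℝ => exp (t • b)) (h : a * x + x * b + q = 0) :
    x = ∫ t in Ici (0 : ℝ), exp (t • a) * q * exp (t • b) := by
  have hderiv (t : ℝ) : HasDerivAt (fun t : ℝ => exp (t • a) * x * exp (t • b))
      (-(exp (t • a) * q * exp (t • b))) t := by
    simpa [eq_neg_of_add_eq_zero_left h] using hasDerivAt_exp_smul_mul_mul_exp_smul a b x t
  have hFTC := integral_Ioi_of_hasDerivAt_of_tendsto' (fun t _ => hderiv t)
    ((integrableOn_exp_smul_mul_mul_exp_smul ha hb q).neg.mono_set Ioi_subset_Ici_self)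
    ((ha.mul_const x).mul hb).tendsto_zero
  simp only [integral_neg, zero_smul, exp_zero, one_mul, mul_one, zero_sub, neg_inj] at hFTC
  rw [integral_Ici_eq_integral_Ioi, hFTC]

end BanachAlgebra

theorem Module.End.exists_hasEigenvector_of_commute {K V : Type*} [Field K] [IsAlgClosed K]
    [AddCommGroup V] [Module K V] [FiniteDimensional K V] {f g : Module.End K V}
    (hfg : Commute f g) {μ : K} (hμ : g.HasEigenvalue μ) :
    ∃ l w, f.HasEigenvector l w ∧ g.HasEigenvector μ w := by
  have hmaps : MapsTo f (g.eigenspace μ) (g.eigenspace μ) :=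
    Module.End.mapsTo_genEigenspace_of_comm hfg.symm μ 1
  have : Nontrivial (g.eigenspace μ) := Submodule.nontrivial_iff_ne_bot.mpr hμ
  obtain ⟨l, hl⟩ := Module.End.exists_eigenvalue (f.restrict hmaps)
  obtain ⟨w, hw⟩ := hl.exists_hasEigenvector
  have hw0 : (w : V) ≠ 0 := by simpa using hw.2
  refine ⟨l, w, ⟨?_, hw0⟩, ⟨w.2, hw0⟩⟩
  rw [Module.End.mem_genEigenspace_one]
  exact congrArg Subtype.val hw.apply_eq_smul

namespace Matrix

open scoped Matrix.Norms.Operator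

variable {m : Type*} [Fintype m] [DecidableEq m]

theorem spectrum_transpose {R : Type*} [CommRing R] (B : Matrix m m R) :
    spectrum R Bᵀ = spectrum R B := by
  ext μ
  have h : algebraMap R (Matrix m m R) μ - Bᵀ = (algebraMap R (Matrix m m R) μ - B)ᵀ := by
    rw [transpose_sub, algebraMap_eq_diagonal, diagonal_transpose]
  rw [spectrum.mem_iff, spectrum.mem_iff, h, isUnit_iff_isUnit_det, det_transpose,
    ← isUnit_iff_isUnit_det]

theorem exp_mulVec_of_mulVec_eq_smul {B : Matrix m m ℂ} {v : m → ℂ} {l : ℂ}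
    (hv : B *ᵥ v = l • v) : exp B *ᵥ v = Complex.exp l • v := by
  have hpow (k : ℕ) : B ^ k *ᵥ v = l ^ k • v := by
    induction k with
    | zero => simp
    | succ k ih => rw [pow_succ, ← mulVec_mulVec, hv, mulVec_smul, ih, smul_smul, pow_succ']
  have hB : HasSum (fun k : ℕ => ((k.factorial⁻¹ : ℂ) * l ^ k) • v) (exp B *ᵥ v) := by
    have := (exp_series_hasSum_exp' (𝕂 := ℂ) B).map (mulVec.addMonoidHomLeft v)
      (continuous_id.matrix_mulVec continuous_const)
    simp only [Function.comp_def, mulVec.addMonoidHomLeft, AddMonoidHom.coe_mk, ZeroHom.coe_mk,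
      smul_mulVec, hpow, smul_smul] at this
    exact this
  have hl := (exp_series_hasSum_exp' (𝕂 := ℂ) l).smul_const v
  rw [Complex.exp_eq_exp_ℂ]
  exact hB.unique (by simpa only [smul_eq_mul] using hl)

theorem spectrum_exp_subset (B : Matrix m m ℂ) :
    spectrum ℂ (exp B) ⊆ Complex.exp '' spectrum ℂ B := by
  intro μ hμ
  rw [← spectrum_toLin', ← Module.End.hasEigenvalue_iff_mem_spectrum] at hμ
  have hcomm : Commute (toLin' B) (toLin' (exp B)) :=
    (Commute.exp_right (Commute.refl B)).map (toLinAlgEquiv' : Matrix m m ℂ ≃ₐ[ℂ] _)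
  obtain ⟨l, w, hB, hexp⟩ := Module.End.exists_hasEigenvector_of_commute hcomm hμ
  refine ⟨l, ?_, ?_⟩
  · rw [← spectrum_toLin', ← Module.End.hasEigenvalue_iff_mem_spectrum]
    exact Module.End.hasEigenvalue_of_hasEigenvector hB
  · have h := hexp.apply_eq_smul
    rw [toLin'_apply, exp_mulVec_of_mulVec_eq_smul (by simpa using hB.apply_eq_smul)] at h
    exact smul_left_injective ℂ hexp.2 h

theorem spectralRadius_exp_lt {B : Matrix m m ℂ} {ε : ℝ} (hB : ∀ μ ∈ spectrum ℂ B, μ.re < -ε) :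
    spectralRadius ℂ (exp B) < ENNReal.ofReal (Real.exp (-ε)) := by
  rcases (spectrum ℂ (exp B)).eq_empty_or_nonempty with hempty | hne
  · simp [spectralRadius, hempty, Real.exp_pos]
  refine spectrum.spectralRadius_lt_of_forall_lt_of_nonempty hne fun z hz => ?_
  obtain ⟨l, hl, rfl⟩ := spectrum_exp_subset B hz
  rw [← NNReal.coe_lt_coe, coe_nnnorm, Real.coe_toNNReal _ (Real.exp_pos _).le, Complex.norm_exp]
  exact Real.exp_lt_exp.mpr (hB l hl)

theorem decaysExponentially_exp_smul_of_re_lt {B : Matrix m m ℂ} {ε : ℝ} (hε : 0 < ε)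
    (hB : ∀ μ ∈ spectrum ℂ B, μ.re < -ε) : DecaysExponentially fun t : ℝ => exp (t • B) := by
  -- naming `a` spares a costly unification of two instance paths for the matrix ring
  obtain ⟨C, hC⟩ := spectrum.exists_norm_pow_le_of_spectralRadius_lt (a := exp B)
    (Real.exp_pos (-ε)) (spectralRadius_exp_lt hB)
  exact decaysExponentially_exp_smul_of_norm_pow_le (a := B) hε hC

theorem linfty_opNorm_map_ofReal (A : Matrix m m ℝ) : ‖A.map Complex.ofReal‖ = ‖A‖ := by
  simp [linfty_opNorm_def]

theorem exp_map_ofReal (A : Matrix m m ℝ) :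
    exp (A.map Complex.ofReal) = (exp A).map Complex.ofReal :=
  (map_exp (Complex.ofRealHom.mapMatrix : Matrix m m ℝ →+* Matrix m m ℂ)
    (continuous_id.matrix_map Complex.continuous_ofReal) A).symm

end Matrix

namespace IsHurwitz

open scoped Matrix.Norms.Operator

variable {n : ℕ} {A : Matrix (Fin n) (Fin n) ℝ}

theorem exists_re_lt_neg (hA : IsHurwitz A) :
    ∃ ε > 0, ∀ μ ∈ spectrum ℂ (A.map Complex.ofReal), μ.re < -ε := by
  have hμ (μ : ℂ) (hμ : μ ∈ spectrum ℂ (A.map Complex.ofReal)) :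
      ∀ᶠ ε in 𝓝[>] (0 : ℝ), μ.re < -ε :=
    nhdsWithin_le_nhds ((continuous_neg.tendsto' 0 0 neg_zero).eventually (lt_mem_nhds (hA μ hμ)))
  exact (eventually_mem_nhdsWithin.and
    ((eventually_all_finite (Matrix.finite_spectrum _)).mpr hμ)).exists

theorem transpose (hA : IsHurwitz A) : IsHurwitz Aᵀ := fun μ hμ =>
  hA μ (by rwa [transpose_map, spectrum_transpose] at hμ)

theorem decaysExponentially_exp (hA : IsHurwitz A) :
    DecaysExponentially fun t : ℝ => exp (t • A) := by
  obtain ⟨ε, hε, hre⟩ := hA.exists_re_lt_neg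
  obtain ⟨C, δ, hδ, hC⟩ := decaysExponentially_exp_smul_of_re_lt hε hre
  refine ⟨C, δ, hδ, fun t ht => ?_⟩
  have hmap : (t • A).map Complex.ofReal = t • A.map Complex.ofReal := by
    ext i j; simp [Complex.real_smul]
  rw [← linfty_opNorm_map_ofReal, ← exp_map_ofReal, hmap]
  exact hC t ht

theorem eq_integral_of_lyapunov {Q X : Matrix (Fin n) (Fin n) ℝ} (hA : IsHurwitz A)
    (hX : Aᵀ * X + X * A + Q = 0) :
    X = Matrix.of fun i j => ∫ t in Ici (0 : ℝ), (exp (t • Aᵀ) * Q * exp (t • A)) i j := by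
  have hint := integrableOn_exp_smul_mul_mul_exp_smul
    hA.transpose.decaysExponentially_exp hA.decaysExponentially_exp Q
  ext i j
  calc X i j = (∫ t in Ici (0 : ℝ), exp (t • Aᵀ) * Q * exp (t • A)) i j :=
        congrArg (· i j) (eq_integral_of_mul_add_mul_add_eq_zero
          hA.transpose.decaysExponentially_exp hA.decaysExponentially_exp hX)
    _ = ∫ t in Ici (0 : ℝ), (exp (t • Aᵀ) * Q * exp (t • A)) i j :=
        ((entryLinearMap ℝ ℝ i j).toContinuousLinearMap.integral_comp_comm hint).symm

end IsHurwitz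

/-- For a Hurwitz matrix `A`, the Lyapunov equation `Aᵀ X + X A + Q = 0` has at most one
solution; consequently its unique solution is `X = ∫_0^∞ exp(Aᵀ t) Q exp(A t) dt`. -/
theorem lyapunov_unique_solution {n : ℕ} (A Q X Y : Matrix (Fin n) (Fin n) ℝ)
    (hA : IsHurwitz A)
    (hX : Aᵀ * X + X * A + Q = 0) (hY : Aᵀ * Y + Y * A + Q = 0) :
    X = Y ∧
    X = Matrix.of fun i j => ∫ t in Ici (0 : ℝ), (exp (t • Aᵀ) * Q * exp (t • A)) i j :=
  ⟨(hA.eq_integral_of_lyapunov hX).trans (hA.eq_integral_of_lyapunov hY).symm,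
    hA.eq_integral_of_lyapunov hX⟩
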